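/- For an integrable real random variable Z with continuous strictly increasing distribution function F and τ ∈ (0,1), the difference in expected pinball losses satisfies E[S(z, Z)] − E[S(q, Z)] = ∫ between q and z of (F(t) − τ) dt, where q = F⁻¹(τ); consequently q is the unique minimizer of z ↦ E[S(z, Z)]. -/

import Mathlib

/-!
Writing the pinball loss as `(z - x)⁺ - τ (z - x)`, the linear part contributes `τ (z - q)`
to the difference of expectations, while `(z - x)⁺ - (q - x)⁺ = ∫_q^z 𝟙{x ≤ t} dt`, so by
Fubini the positive parts contribute `∫_q^z F(t) dt`. Strict monotonicity of `F` gives `F - τ`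
the sign of `t - q`, which makes the integral positive for `z ≠ q`.
-/

open MeasureTheory Set

noncomputable def pinballLoss (τ z x : ℝ) : ℝ :=
  ((if x ≤ z then (1:ℝ) else 0) - τ) * (z - x)

lemma pinballLoss_eq (τ z x : ℝ) : pinballLoss τ z x = max (z - x) 0 - τ * (z - x) := by
  unfold pinballLoss
  split_ifs with h
  · rw [max_eq_left (sub_nonneg.2 h)]; ring
  · rw [max_eq_right (by linarith [not_le.1 h])]; ring

lemma integral_Ioc_ite_le (x : ℝ) {a b : ℝ} (hab : a ≤ b) :
    ∫ t in Ioc a b, (if x ≤ t then (1:ℝ) else 0) = max (b - x) 0 - max (a - x) 0 := by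
  have hind : (fun t => if x ≤ t then (1:ℝ) else 0) = (Ici x).indicator 1 := by
    ext t; simp [indicator_apply]
  have hIoi : volume.real (Ici x ∩ Ioc a b) = volume.real (Ioi x ∩ Ioc a b) :=
    measureReal_congr (Ioi_ae_eq_Ici.symm.inter (ae_eq_refl _))
  rw [hind, integral_indicator_one measurableSet_Ici, measureReal_restrict_apply measurableSet_Ici,
    hIoi, inter_comm, Ioc_inter_Ioi, Real.volume_real_Ioc]
  grind

lemma integral_ite_le (μ : Measure ℝ) (t : ℝ) :
    ∫ x, (if x ≤ t then (1:ℝ) else 0) ∂μ = μ.real (Iic t) := by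
  rw [← integral_indicator_one measurableSet_Iic]
  rfl

lemma integral_max_sub_sub_max_sub_eq_intervalIntegral (μ : Measure ℝ) [IsFiniteMeasure μ]
    {a b : ℝ} (hab : a ≤ b) :
    ∫ x, (max (b - x) 0 - max (a - x) 0) ∂μ = ∫ t in a..b, μ.real (Iic t) := by
  have hint : Integrable (Function.uncurry fun x t : ℝ => if x ≤ t then (1:ℝ) else 0)
      (μ.prod (volume.restrict (Ioc a b))) := by
    refine (integrable_const (1:ℝ)).mono' ?_ (ae_of_all _ fun p => ?_)
    · exact (Measurable.ite (measurableSet_le measurable_fst measurable_snd) measurable_const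
        measurable_const).aestronglyMeasurable
    · simp only [Function.uncurry]; split_ifs <;> simp
  calc ∫ x, (max (b - x) 0 - max (a - x) 0) ∂μ
      = ∫ x, (∫ t in Ioc a b, if x ≤ t then (1:ℝ) else 0) ∂μ := by
        simp_rw [integral_Ioc_ite_le _ hab]
    _ = ∫ t in Ioc a b, ∫ x, (if x ≤ t then (1:ℝ) else 0) ∂μ :=
        integral_integral_swap hint
    _ = ∫ t in a..b, μ.real (Iic t) := by
        simp_rw [integral_ite_le, intervalIntegral.integral_of_le hab]

lemma integral_max_sub_sub_integral_max_sub_eq_intervalIntegral (μ : Measure ℝ)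
    [IsFiniteMeasure μ] (hZ : Integrable (fun x : ℝ => x) μ) (a b : ℝ) :
    (∫ x, max (b - x) 0 ∂μ) - ∫ x, max (a - x) 0 ∂μ = ∫ t in a..b, μ.real (Iic t) := by
  have hint (c : ℝ) : Integrable (fun x => max (c - x) 0) μ :=
    ((integrable_const c).sub hZ).pos_part
  rcases le_total a b with hab | hba
  · rw [← integral_max_sub_sub_max_sub_eq_intervalIntegral μ hab,
      integral_sub (hint b) (hint a)]
  · rw [intervalIntegral.integral_symm,
      ← integral_max_sub_sub_max_sub_eq_intervalIntegral μ hba, integral_sub (hint a) (hint b),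
      neg_sub]

lemma integral_pinballLoss_sub_integral_pinballLoss (μ : Measure ℝ) [IsProbabilityMeasure μ]
    (hZ : Integrable (fun x : ℝ => x) μ) (τ q z : ℝ) :
    (∫ x, pinballLoss τ z x ∂μ) - ∫ x, pinballLoss τ q x ∂μ =
      ∫ t in q..z, (μ.real (Iic t) - τ) := by
  have hlin (c : ℝ) : Integrable (fun x => c - x) μ := (integrable_const c).sub hZ
  have hexp (c : ℝ) : ∫ x, pinballLoss τ c x ∂μ =
      (∫ x, max (c - x) 0 ∂μ) - τ * (c - ∫ x, x ∂μ) := by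
    simp_rw [pinballLoss_eq]
    rw [integral_sub (hlin c).pos_part ((hlin c).const_mul τ), integral_const_mul,
      integral_sub (integrable_const c) hZ]
    simp
  have hcdf : Monotone fun t => μ.real (Iic t) := fun _ _ hst =>
    measureReal_mono (Iic_subset_Iic.2 hst)
  rw [hexp, hexp, intervalIntegral.integral_sub hcdf.intervalIntegrable intervalIntegrable_const,
    ← integral_max_sub_sub_integral_max_sub_eq_intervalIntegral μ hZ,
    intervalIntegral.integral_const, smul_eq_mul]
  ring

lemma StrictMono.intervalIntegral_sub_apply_pos {F : ℝ → ℝ} (hF : StrictMono F) {q z : ℝ}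
    (hz : z ≠ q) : 0 < ∫ t in q..z, (F t - F q) := by
  have hint (a b : ℝ) : IntervalIntegrable (fun t => F t - F q) volume a b :=
    hF.monotone.intervalIntegrable.sub intervalIntegrable_const
  rcases hz.lt_or_gt with h | h
  · rw [intervalIntegral.integral_symm, neg_pos]
    have hneg := intervalIntegral.intervalIntegral_pos_of_pos_on (hint z q).neg
      (fun t ht => neg_pos.2 (sub_neg.2 (hF ht.2))) h
    simpa only [Pi.neg_apply, intervalIntegral.integral_neg, neg_pos] using hneg
  · exact intervalIntegral.intervalIntegral_pos_of_pos_on (hint q z)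
      (fun t ht => sub_pos.2 (hF ht.1)) h

theorem stmt_4_general (μ : Measure ℝ) [IsProbabilityMeasure μ]
    (hZ : Integrable (fun x : ℝ => x) μ)
    (F : ℝ → ℝ) (hF : ∀ t, F t = (μ (Set.Iic t)).toReal)
    (hFm : StrictMono F)
    (τ : ℝ)
    (q : ℝ) (hq : F q = τ) :
    (∀ z : ℝ,
      (∫ x, ((if x ≤ z then (1:ℝ) else 0) - τ) * (z - x) ∂μ) -
        (∫ x, ((if x ≤ q then (1:ℝ) else 0) - τ) * (q - x) ∂μ) =
        ∫ t in q..z, (F t - τ)) ∧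
    (∀ z : ℝ, z ≠ q →
      (∫ x, ((if x ≤ q then (1:ℝ) else 0) - τ) * (q - x) ∂μ) <
        ∫ x, ((if x ≤ z then (1:ℝ) else 0) - τ) * (z - x) ∂μ) := by
  obtain rfl : F = fun t => μ.real (Iic t) := funext hF
  subst hq
  have hdiff := integral_pinballLoss_sub_integral_pinballLoss μ hZ (μ.real (Iic q)) q
  refine ⟨hdiff, fun z hz => sub_pos.1 ?_⟩
  exact (hdiff z).symm ▸ hFm.intervalIntegral_sub_apply_pos hz

/-- Expected pinball loss difference equals the signed integral of F - τ between the
τ-quantile and the forecast; hence the quantile is the unique minimizer. -/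
theorem stmt_4 (μ : Measure ℝ) [IsProbabilityMeasure μ]
    (hZ : Integrable (fun x : ℝ => x) μ)
    (F : ℝ → ℝ) (hF : ∀ t, F t = (μ (Set.Iic t)).toReal)
    (hFc : Continuous F) (hFm : StrictMono F)
    (τ : ℝ) (hτ : τ ∈ Set.Ioo (0:ℝ) 1)
    (q : ℝ) (hq : F q = τ) :
    (∀ z : ℝ,
      (∫ x, ((if x ≤ z then (1:ℝ) else 0) - τ) * (z - x) ∂μ) -
        (∫ x, ((if x ≤ q then (1:ℝ) else 0) - τ) * (q - x) ∂μ) =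
        ∫ t in q..z, (F t - τ)) ∧
    (∀ z : ℝ, z ≠ q →
      (∫ x, ((if x ≤ q then (1:ℝ) else 0) - τ) * (q - x) ∂μ) <
        ∫ x, ((if x ≤ z then (1:ℝ) else 0) - τ) * (z - x) ∂μ) :=
  stmt_4_general μ hZ F hF hFm τ q hq
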